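/- arXiv:1805.04785 — 5 statements merged into one kernel-verified Lean document; each statement's English description precedes it below -/
import Mathlib

section
/- Let N be a finite set of items with revenues r_i ≥ 0 and utilities v_i ≥ 0, and define the expected revenue of a nonempty assortment S ⊆ N as R(S) = (∑_{i∈S} r_i v_i)/(1 + ∑_{i∈S} v_i). Then the maximum of R over all subsets S of N is attained by a level set: there exists θ ≥ 0 such that R({i ∈ N : r_i ≥ θ}) = max over all subsets S ⊆ N of R(S). -/
open Finset

/-- MNL expected revenue of an assortment `S`. -/
noncomputable def mnlR {N : Type*} (r v : N → ℝ) (S : Finset N) : ℝ :=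
  (∑ i ∈ S, r i * v i) / (1 + ∑ i ∈ S, v i)

/-- The θ-level set: items with revenue at least θ. -/
noncomputable def levelSet {N : Type*} [Fintype N] (r : N → ℝ) (θ : ℝ) : Finset N :=
  Finset.univ.filter (fun i => θ ≤ r i)

/-- The revenue potential function F(θ) = R(L_θ). -/
noncomputable def potF {N : Type*} [Fintype N] (r v : N → ℝ) (θ : ℝ) : ℝ :=
  mnlR r v (levelSet r θ)

/-- The right limit F(θ⁺) = R({i : r_i > θ}). -/
noncomputable def potFplus {N : Type*} [Fintype N] (r v : N → ℝ) (θ : ℝ) : ℝ :=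
  mnlR r v (Finset.univ.filter (fun i => θ < r i))

/-!
Let `M` be the optimal revenue, attained by some `S₀`, so `M ≥ R(∅) = 0`. Clearing the
denominator, `M ≤ R(S)` is equivalent to `M ≤ ∑ i ∈ S, (r i - M) * v i`. The right-hand side
is maximised by taking exactly the items with nonnegative summand, i.e. the level set
`{i | M ≤ r i}`; since `S₀` already achieves `M`, so does that level set.
-/

theorem Finset.sum_le_sum_of_nonneg_of_nonpos {ι M : Type*} [DecidableEq ι]
    [AddCommMonoid M] [PartialOrder M] [IsOrderedAddMonoid M] {f : ι → M} {s t : Finset ι}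
    (h_nonneg : ∀ i ∈ t, 0 ≤ f i) (h_nonpos : ∀ i ∉ t, f i ≤ 0) :
    ∑ i ∈ s, f i ≤ ∑ i ∈ t, f i :=
  calc ∑ i ∈ s, f i = ∑ i ∈ s ∩ t, f i + ∑ i ∈ s \ t, f i :=
        (sum_inter_add_sum_sdiff s t f).symm
    _ ≤ ∑ i ∈ s ∩ t, f i + 0 :=
        add_le_add_right (sum_nonpos fun i hi ↦ h_nonpos i (mem_sdiff.1 hi).2) _
    _ ≤ ∑ i ∈ t, f i := by
        rw [add_zero]
        exact sum_le_sum_of_subset_of_nonneg inter_subset_right fun i hi _ ↦ h_nonneg i hi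

section mnlR

variable {N : Type*} {r v : N → ℝ}

@[simp]
lemma mnlR_empty : mnlR r v ∅ = 0 := by
  simp [mnlR]

lemma le_mnlR_iff (hv : ∀ i, 0 ≤ v i) (θ : ℝ) (S : Finset N) :
    θ ≤ mnlR r v S ↔ θ ≤ ∑ i ∈ S, (r i - θ) * v i := by
  have hden : 0 < 1 + ∑ i ∈ S, v i := by
    linarith [sum_nonneg fun i (_ : i ∈ S) ↦ hv i]
  rw [mnlR, le_div_iff₀ hden]
  simp only [sub_mul, sum_sub_distrib, ← mul_sum]
  constructor <;> intro h <;> linarith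

lemma sum_sub_mul_le_sum_levelSet [Fintype N] (hv : ∀ i, 0 ≤ v i) (θ : ℝ) (S : Finset N) :
    ∑ i ∈ S, (r i - θ) * v i ≤ ∑ i ∈ levelSet r θ, (r i - θ) * v i := by
  classical
  refine sum_le_sum_of_nonneg_of_nonpos (fun i hi ↦ ?_) (fun i hi ↦ ?_)
  · have : θ ≤ r i := (mem_filter.1 hi).2
    exact mul_nonneg (sub_nonneg.2 this) (hv i)
  · have : r i < θ := by simpa [levelSet] using hi
    exact mul_nonpos_of_nonpos_of_nonneg (sub_nonpos.2 this.le) (hv i)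

end mnlR

theorem stmt0_general {N : Type*} [Fintype N] (r v : N → ℝ)
    (hv : ∀ i, 0 ≤ v i) :
    ∃ θ : ℝ, 0 ≤ θ ∧ ∀ S : Finset N, mnlR r v S ≤ mnlR r v (levelSet r θ) := by
  obtain ⟨S₀, -, hS₀⟩ := exists_max_image (univ : Finset (Finset N)) (mnlR r v) univ_nonempty
  set M := mnlR r v S₀
  have hmax : ∀ S, mnlR r v S ≤ M := fun S ↦ hS₀ S (mem_univ S)
  have hM : 0 ≤ M := by simpa using hmax ∅
  refine ⟨M, hM, fun S ↦ (hmax S).trans ?_⟩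
  rw [le_mnlR_iff hv]
  calc M ≤ ∑ i ∈ S₀, (r i - M) * v i := (le_mnlR_iff hv M S₀).1 le_rfl
    _ ≤ ∑ i ∈ levelSet r M, (r i - M) * v i := sum_sub_mul_le_sum_levelSet hv M S₀

/-- the maximum of R over all subsets is attained by a level set. -/
theorem stmt0 {N : Type*} [Fintype N] (r v : N → ℝ)
    (hr : ∀ i, 0 ≤ r i) (hv : ∀ i, 0 ≤ v i) :
    ∃ θ : ℝ, 0 ≤ θ ∧ ∀ S : Finset N, mnlR r v S ≤ mnlR r v (levelSet r θ) :=
  stmt0_general r v hv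
end

section
/- Let F(θ) = R({i : r_i ≥ θ}) and F(θ⁺) = R({i : r_i > θ}) for the MNL expected revenue R. Then for any θ ≥ 0, F(θ) − F(θ⁺) = γ_θ · (θ − F(θ⁺)), where γ_θ = (∑_{r_i = θ} v_i)/(1 + ∑_{r_i ≥ θ} v_i). In particular, F(θ) − θ = (1 − γ_θ)(F(θ⁺) − θ). -/
/-! Adding items of revenue exactly θ and total weight E to an assortment adds θE to the numerator
and E to the denominator of R, so the new revenue is the convex combination
(1 - γ) R + γ θ with γ = E / (1 + new total weight). -/

open Finset

lemma levelSet_eq_union {N : Type*} [Fintype N] [DecidableEq N] (r : N → ℝ) (θ : ℝ) :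
    levelSet r θ = univ.filter (fun i => θ < r i) ∪ univ.filter (fun i => r i = θ) := by
  ext i
  simp [levelSet, le_iff_lt_or_eq, eq_comm (a := θ)]

lemma mnlR_union_sub_mnlR {N : Type*} [DecidableEq N] (r v : N → ℝ) (hv : ∀ i, 0 ≤ v i)
    {S T : Finset N} (hST : Disjoint S T) {θ : ℝ} (hT : ∀ i ∈ T, r i = θ) :
    mnlR r v (S ∪ T) - mnlR r v S =
      (∑ i ∈ T, v i) / (1 + ∑ i ∈ S ∪ T, v i) * (θ - mnlR r v S) := by
  have hrT : ∑ i ∈ T, r i * v i = θ * ∑ i ∈ T, v i := by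
    rw [mul_sum]
    exact sum_congr rfl fun i hi => by rw [hT i hi]
  have hS : 0 ≤ ∑ i ∈ S, v i := sum_nonneg fun i _ => hv i
  have hT' : 0 ≤ ∑ i ∈ T, v i := sum_nonneg fun i _ => hv i
  have : 0 < 1 + ∑ i ∈ S, v i := by linarith
  have : 0 < 1 + ∑ i ∈ S, v i + ∑ i ∈ T, v i := by linarith
  simp only [mnlR, sum_union hST, hrT, ← add_assoc]
  field_simp
  ring

theorem stmt4_general {N : Type*} [Fintype N] (r v : N → ℝ)
    (hv : ∀ i, 0 ≤ v i) (θ : ℝ) :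
    potF r v θ - potFplus r v θ =
      ((∑ i ∈ Finset.univ.filter (fun i => r i = θ), v i) /
        (1 + ∑ i ∈ levelSet r θ, v i)) * (θ - potFplus r v θ) ∧
    potF r v θ - θ =
      (1 - (∑ i ∈ Finset.univ.filter (fun i => r i = θ), v i) /
        (1 + ∑ i ∈ levelSet r θ, v i)) * (potFplus r v θ - θ) := by
  classical
  have key := mnlR_union_sub_mnlR r v hv (S := univ.filter (fun i => θ < r i))
    (disjoint_filter.2 fun _ _ hlt heq => hlt.ne' heq) (fun _ hi => (mem_filter.1 hi).2)
  rw [← levelSet_eq_union] at key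
  simp only [potF, potFplus]
  exact ⟨key, by linear_combination key⟩

/-- F(θ) − F(θ⁺) = γ_θ (θ − F(θ⁺)) and F(θ) − θ = (1 − γ_θ)(F(θ⁺) − θ). -/
theorem stmt4 {N : Type*} [Fintype N] (r v : N → ℝ)
    (hv : ∀ i, 0 ≤ v i) (θ : ℝ) (hθ : 0 ≤ θ) :
    potF r v θ - potFplus r v θ =
      ((∑ i ∈ Finset.univ.filter (fun i => r i = θ), v i) /
        (1 + ∑ i ∈ levelSet r θ, v i)) * (θ - potFplus r v θ) ∧
    potF r v θ - θ =
      (1 - (∑ i ∈ Finset.univ.filter (fun i => r i = θ), v i) /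
        (1 + ∑ i ∈ levelSet r θ, v i)) * (potFplus r v θ - θ) :=
  stmt4_general r v hv θ
end

section
/- Let X_1, …, X_L be i.i.d. real random variables with mean μ and a ≤ X_i ≤ b almost surely. For any δ ∈ (0,1], with probability at least 1 − Lδ, simultaneously for all ℓ ∈ {1,…,L}: |(1/ℓ)∑_{i=1}^ℓ X_i − μ| ≤ √(2(b−a)² ln(8/(δℓ)) / ℓ). -/
/-!
Center the variables, `Y i = X i - μ`, so that by Hoeffding's lemma each `Y i` is sub-Gaussian
with variance proxy `(b - a)² / 4`. Since `exp (s * (Y 0 + ⋯ + Y n))` is a nonnegative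
submartingale, Doob's maximal inequality bounds the probability that some partial sum of length
at most `N` exceeds `ε` by `exp (-ε² / (2 N (b - a)² / 4))`, the same bound Hoeffding gives for
the last partial sum alone.

Group the indices `ℓ` into dyadic blocks `2^k ≤ ℓ < 2^(k+1)`. On block `k` the radius
`ℓ √(2 (b - a)² log (8 / (δ ℓ)) / ℓ)` allowed for the centered sum is at least the single
threshold `√(2 (b - a)² 2^k log (4 / (δ 2^k)))`, so the maximal inequality over the first
`2^(k+1)` partial sums charges the whole block only `(δ 2^k / 4)² ≤ δ 2^k / 4` per tail. Summing
over `k ≤ log₂ L` costs at most `δ L / 2` per tail, whereas a union bound over the individual `ℓ`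
would pay for each of them.
-/

open MeasureTheory ProbabilityTheory Real

lemma sqrt_dyadic_le_mul_sqrt (w : ℝ) {δ : ℝ} (hδ : 0 < δ) {k ℓ : ℕ} (hkℓ : 2 ^ k ≤ ℓ)
    (hℓk : ℓ ≤ 2 ^ (k + 1)) :
    √(2 * w ^ 2 * 2 ^ k * log (4 / (δ * 2 ^ k))) ≤ ℓ * √(2 * w ^ 2 * log (8 / (δ * ℓ)) / ℓ) := by
  have hkℓ' : (2 : ℝ) ^ k ≤ ℓ := by exact_mod_cast hkℓ
  have hℓk' : (ℓ : ℝ) ≤ 2 * 2 ^ k := by rw [← pow_succ']; exact_mod_cast hℓk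
  have hℓ : (0 : ℝ) < ℓ := lt_of_lt_of_le (by positivity) hkℓ'
  have hsqrt : √(ℓ * (2 * w ^ 2 * log (8 / (δ * ℓ)))) =
      ℓ * √(2 * w ^ 2 * log (8 / (δ * ℓ)) / ℓ) := by
    rw [show (ℓ : ℝ) * (2 * w ^ 2 * log (8 / (δ * ℓ))) =
        ℓ ^ 2 * (2 * w ^ 2 * log (8 / (δ * ℓ)) / ℓ) by field_simp,
      sqrt_mul (sq_nonneg _), sqrt_sq hℓ.le]
  rw [← hsqrt]
  rcases le_or_gt 0 (log (4 / (δ * 2 ^ k))) with hlog | hlog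
  · have hlog_le : log (4 / (δ * 2 ^ k)) ≤ log (8 / (δ * ℓ)) :=
      log_le_log (by positivity)
        (by rw [div_le_div_iff₀ (by positivity) (by positivity)]; nlinarith)
    apply sqrt_le_sqrt
    calc 2 * w ^ 2 * 2 ^ k * log (4 / (δ * 2 ^ k)) ≤ 2 * w ^ 2 * ℓ * log (8 / (δ * ℓ)) := by
          gcongr
      _ = ℓ * (2 * w ^ 2 * log (8 / (δ * ℓ))) := by ring
  · rw [sqrt_eq_zero'.2 (mul_nonpos_of_nonneg_of_nonpos (by positivity) hlog.le)]
    positivity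

lemma sum_range_log_sq_le {δ : ℝ} (hδ : 0 ≤ δ) {L : ℕ} (hL : L ≠ 0) (hδL : L * δ ≤ 4) :
    ∑ k ∈ Finset.range (Nat.log 2 L + 1), (δ * 2 ^ k / 4) ^ 2 ≤ L * δ / 2 := by
  have h2K : (2 : ℝ) ^ Nat.log 2 L ≤ L := by exact_mod_cast Nat.pow_log_le_self 2 hL
  calc ∑ k ∈ Finset.range (Nat.log 2 L + 1), (δ * 2 ^ k / 4) ^ 2
      ≤ ∑ k ∈ Finset.range (Nat.log 2 L + 1), δ / 4 * 2 ^ k := by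
        refine Finset.sum_le_sum fun k hk ↦ ?_
        have h2k : (2 : ℝ) ^ k ≤ L := by
          exact_mod_cast Nat.pow_le_of_le_log hL (Nat.lt_succ_iff.1 (Finset.mem_range.1 hk))
        have hδk : δ * 2 ^ k ≤ 4 := (mul_le_mul_of_nonneg_left h2k hδ).trans (by linarith)
        nlinarith [(by positivity : (0 : ℝ) ≤ δ * 2 ^ k)]
    _ = δ / 4 * (2 * 2 ^ Nat.log 2 L - 1) := by
        rw [← Finset.mul_sum, geom_sum_eq (by norm_num), pow_succ']
        norm_num
    _ ≤ L * δ / 2 := by nlinarith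

lemma mul_lt_abs_sum_sub_of_lt_abs_div_sub {x : ℕ → ℝ} {μ r : ℝ} {ℓ : ℕ} (hℓ : ℓ ≠ 0)
    (h : r < |(∑ i ∈ Finset.range ℓ, x i) / ℓ - μ|) :
    ℓ * r < |∑ i ∈ Finset.range ℓ, (x i - μ)| := by
  have hℓ' : (0 : ℝ) < ℓ := by positivity
  rw [Finset.sum_sub_distrib, Finset.sum_const, Finset.card_range, nsmul_eq_mul,
    show ∑ i ∈ Finset.range ℓ, x i - ℓ * μ = ℓ * ((∑ i ∈ Finset.range ℓ, x i) / ℓ - μ) by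
      field_simp, abs_mul, abs_of_pos hℓ']
  exact mul_lt_mul_of_pos_left h hℓ'

section

variable {Ω : Type*} [MeasurableSpace Ω] {P : Measure Ω} [IsProbabilityMeasure P]
  {Y : ℕ → Ω → ℝ} {s w δ : ℝ}

lemma ofReal_one_sub_le_measure_of_measure_compl_le {A : Set Ω} {p : ℝ} (hp : 0 ≤ p)
    (h : P Aᶜ ≤ ENNReal.ofReal p) : ENNReal.ofReal (1 - p) ≤ P A := by
  rw [ENNReal.ofReal_sub _ hp, ENNReal.ofReal_one, tsub_le_iff_right]
  calc 1 = P (A ∪ Aᶜ) := by simp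
    _ ≤ P A + P Aᶜ := measure_union_le _ _
    _ ≤ P A + ENNReal.ofReal p := by gcongr

lemma one_le_mgf_of_integral_eq_zero {Z : Ω → ℝ} (hZ : Integrable Z P)
    (hexp : Integrable (fun ω ↦ exp (s * Z ω)) P) (hmean : P[Z] = 0) : 1 ≤ mgf Z P s :=
  calc (1 : ℝ) = ∫ ω, (1 + s * Z ω) ∂P := by
        rw [integral_add (integrable_const 1) (hZ.const_mul s), integral_const_mul, hmean]
        simp
    _ ≤ mgf Z P s :=
        integral_mono ((integrable_const 1).add (hZ.const_mul s)) hexp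
          fun ω ↦ by linarith [add_one_le_exp (s * Z ω)]

lemma submartingale_exp_mul_sum_range_succ (hY : ∀ i, Measurable (Y i)) (hindep : iIndepFun Y P)
    (hexp : ∀ i, Integrable (fun ω ↦ exp (s * Y i ω)) P) (hmgf : ∀ i, 1 ≤ mgf (Y i) P s) :
    Submartingale (fun n ω ↦ exp (s * ∑ i ∈ Finset.range (n + 1), Y i ω))
      (Filtration.natural Y fun i ↦ (hY i).stronglyMeasurable) P := by
  set 𝒢 := Filtration.natural Y fun i ↦ (hY i).stronglyMeasurable
  set f : ℕ → Ω → ℝ := fun n ω ↦ exp (s * ∑ i ∈ Finset.range (n + 1), Y i ω)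
  have hY𝒢 : ∀ {i n}, i ≤ n → Measurable[𝒢 n] (Y i) := fun hin ↦
    ((Filtration.stronglyAdapted_natural _ _).measurable).mono (𝒢.mono hin) le_rfl
  have hf𝒢 : ∀ n, Measurable[𝒢 n] (f n) := fun n ↦
    ((Finset.measurable_sum _ fun i hi ↦
      hY𝒢 (Nat.lt_succ_iff.1 (Finset.mem_range.1 hi))).const_mul s).exp
  have hf : ∀ n, Integrable (f n) P := fun n ↦ by
    simpa using hindep.integrable_exp_mul_sum hY fun i _ ↦ hexp i
  refine submartingale_of_setIntegral_le_succ (fun n ↦ (hf𝒢 n).stronglyMeasurable) hf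
    fun n E hE ↦ ?_
  have hE' : MeasurableSet E := 𝒢.le n _ hE
  have hindep𝒢 : Indep (𝒢 n) (MeasurableSpace.comap (Y (n + 1)) inferInstance) P := by
    have := indep_iSup_of_disjoint (fun i ↦ (hY i).comap_le) hindep.iIndep
      (S := Set.Iic n) (T := {n + 1}) (by simp)
    simp only [Set.mem_Iic, Set.mem_singleton_iff, iSup_iSup_eq_left] at this
    exact this
  have hindepE : E.indicator (f n) ⟂ᵢ[P] fun ω ↦ exp (s * Y (n + 1) ω) :=
    ((IndepFun_iff_Indep _ _ _).2
      (indep_of_indep_of_le_left hindep𝒢 ((hf𝒢 n).indicator hE).comap_le)).comp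
      measurable_id (by fun_prop : Measurable fun y ↦ exp (s * y))
  have hsplit : ∫ ω in E, f (n + 1) ω ∂P = (∫ ω in E, f n ω ∂P) * mgf (Y (n + 1)) P s := by
    rw [← integral_indicator hE', ← integral_indicator hE', mgf,
      ← hindepE.integral_mul_eq_mul_integral ((hf n).indicator hE').aestronglyMeasurable
        (hexp (n + 1)).aestronglyMeasurable]
    congr 1
    ext ω
    by_cases hω : ω ∈ E <;> simp [hω, f, Finset.sum_range_succ _ (n + 1), mul_add, exp_add]
  rw [hsplit]
  exact le_mul_of_one_le_right (setIntegral_nonneg hE' fun ω _ ↦ (exp_pos _).le) (hmgf _)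

lemma measure_exists_sum_range_ge_le_mgf (hY : ∀ i, Measurable (Y i)) (hindep : iIndepFun Y P)
    (hexp : ∀ i, Integrable (fun ω ↦ exp (s * Y i ω)) P) (hmgf : ∀ i, 1 ≤ mgf (Y i) P s)
    (hs : 0 ≤ s) (ε : ℝ) (N : ℕ) :
    P {ω | ∃ n ∈ Finset.Icc 1 N, ε ≤ ∑ i ∈ Finset.range n, Y i ω} ≤
      ENNReal.ofReal (exp (-(s * ε)) * mgf (fun ω ↦ ∑ i ∈ Finset.range N, Y i ω) P s) := by
  obtain _ | M := N
  · simp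
  set E := {ω | ∃ n ∈ Finset.Icc 1 (M + 1), ε ≤ ∑ i ∈ Finset.range n, Y i ω}
  set f : ℕ → Ω → ℝ := fun n ω ↦ exp (s * ∑ i ∈ Finset.range (n + 1), Y i ω)
  set t : NNReal := (exp (s * ε)).toNNReal
  have hdoob := maximal_ineq (submartingale_exp_mul_sum_range_succ hY hindep hexp hmgf)
    (fun n ω ↦ (exp_pos _).le) (ε := t) M
  have hE : E ⊆
      {ω | (t : ℝ) ≤ (Finset.range (M + 1)).sup' Finset.nonempty_range_add_one fun k ↦ f k ω} := by
    rintro ω ⟨n, hn, hεn⟩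
    obtain ⟨hn1, hnM⟩ := Finset.mem_Icc.1 hn
    obtain ⟨k, rfl⟩ := Nat.exists_eq_add_of_le' hn1
    have hk : k ∈ Finset.range (M + 1) := Finset.mem_range.2 (by omega)
    refine Finset.le_sup'_of_le (fun k ↦ f k ω) hk ?_
    simp only [t, Real.coe_toNNReal _ (exp_pos _).le, f]
    exact exp_le_exp.2 (mul_le_mul_of_nonneg_left hεn hs)
  have hmarkov : (t : ENNReal) * P E ≤
      ENNReal.ofReal (mgf (fun ω ↦ ∑ i ∈ Finset.range (M + 1), Y i ω) P s) := by
    refine le_trans (by gcongr) (hdoob.trans (ENNReal.ofReal_le_ofReal ?_))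
    exact setIntegral_le_integral (by simpa using hindep.integrable_exp_mul_sum hY fun i _ ↦ hexp i)
      (Filter.Eventually.of_forall fun ω ↦ (exp_pos _).le)
  calc P E = ENNReal.ofReal (exp (-(s * ε))) * (t * P E) := by
        rw [← mul_assoc, ← ENNReal.ofReal_coe_nnreal, Real.coe_toNNReal _ (exp_pos _).le,
          ← ENNReal.ofReal_mul (exp_pos _).le, ← exp_add, neg_add_cancel, exp_zero,
          ENNReal.ofReal_one, one_mul]
    _ ≤ _ := by
      rw [ENNReal.ofReal_mul (exp_pos _).le]
      gcongr

lemma measure_exists_sum_range_ge_le_of_iIndepFun (hY : ∀ i, Measurable (Y i))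
    (hindep : iIndepFun Y P) {c : NNReal} (hsubG : ∀ i, HasSubgaussianMGF (Y i) c P)
    (hmean : ∀ i, P[Y i] = 0) {ε : ℝ} (hε : 0 ≤ ε) (N : ℕ) :
    P {ω | ∃ n ∈ Finset.Icc 1 N, ε ≤ ∑ i ∈ Finset.range n, Y i ω} ≤
      ENNReal.ofReal (exp (-ε ^ 2 / (2 * N * c))) := by
  rcases (by positivity : (0 : ℝ) ≤ N * c).eq_or_lt with hNc | hNc
  · rw [mul_assoc, ← hNc, mul_zero, div_zero, exp_zero, ENNReal.ofReal_one]
    exact prob_le_one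
  set s := ε / (N * c)
  have hsum := (HasSubgaussianMGF.sum_of_iIndepFun hindep (s := Finset.range N)
    fun i _ ↦ hsubG i).mgf_le s
  refine (measure_exists_sum_range_ge_le_mgf hY hindep (fun i ↦ (hsubG i).integrable_exp_mul s)
    (fun i ↦ one_le_mgf_of_integral_eq_zero (hsubG i).integrable
      ((hsubG i).integrable_exp_mul s) (hmean i)) (by positivity) ε N).trans
    (ENNReal.ofReal_le_ofReal ?_)
  calc exp (-(s * ε)) * mgf (fun ω ↦ ∑ i ∈ Finset.range N, Y i ω) P s
      ≤ exp (-(s * ε)) * exp (N * c * s ^ 2 / 2) := by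
        gcongr
        simpa using hsum
    _ = exp (-ε ^ 2 / (2 * N * c)) := by
        rw [← exp_add]
        congr 1
        simp only [s]
        field_simp
        ring

lemma measure_exists_sum_range_gt_dyadic_le (hY : ∀ i, Measurable (Y i)) (hindep : iIndepFun Y P)
    (hsubG : ∀ i, HasSubgaussianMGF (Y i) ((‖w‖₊ / 2) ^ 2) P) (hmean : ∀ i, P[Y i] = 0)
    (hδ : 0 < δ) {k : ℕ} (hδk : δ * 2 ^ k ≤ 4) :
    P {ω | ∃ n ∈ Finset.Icc 1 (2 ^ (k + 1)),
      √(2 * w ^ 2 * 2 ^ k * log (4 / (δ * 2 ^ k))) < ∑ i ∈ Finset.range n, Y i ω} ≤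
      ENNReal.ofReal ((δ * 2 ^ k / 4) ^ 2) := by
  rcases eq_or_ne w 0 with rfl | hw
  · have hzero : ∀ᵐ ω ∂P, ∀ i, Y i ω = 0 := ae_all_iff.2 fun i ↦
      (by simpa using hsubG i : HasSubgaussianMGF (Y i) 0 P).ae_eq_zero_of_hasSubgaussianMGF_zero
    refine (measure_mono_null (fun ω ⟨n, _, hn⟩ hω ↦ ?_) (ae_iff.1 hzero)).trans_le zero_le
    simp [hω] at hn
  set lam := √(2 * w ^ 2 * 2 ^ k * log (4 / (δ * 2 ^ k)))
  have hlog : 0 ≤ log (4 / (δ * 2 ^ k)) :=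
    log_nonneg (by rw [le_div_iff₀ (by positivity)]; linarith)
  calc _ ≤ P {ω | ∃ n ∈ Finset.Icc 1 (2 ^ (k + 1)), lam ≤ ∑ i ∈ Finset.range n, Y i ω} :=
        measure_mono <| Set.ofPred_subset_ofPred.2 fun _ ⟨n, hn, hlt⟩ ↦ ⟨n, hn, hlt.le⟩
    _ ≤ ENNReal.ofReal
          (exp (-lam ^ 2 / (2 * ((2 ^ (k + 1) : ℕ) : ℝ) * ((‖w‖₊ / 2) ^ 2 : NNReal)))) :=
        measure_exists_sum_range_ge_le_of_iIndepFun hY hindep hsubG hmean (sqrt_nonneg _) _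
    _ = ENNReal.ofReal ((δ * 2 ^ k / 4) ^ 2) := by
        have hexponent :
            -lam ^ 2 / (2 * ((2 ^ (k + 1) : ℕ) : ℝ) * ((‖w‖₊ / 2) ^ 2 : NNReal)) =
              log ((δ * 2 ^ k / 4) ^ 2) := by
          rw [sq_sqrt (by positivity), ← inv_div (δ * 2 ^ k), log_inv, log_pow]
          push_cast
          rw [Real.norm_eq_abs, div_pow, sq_abs]
          field_simp
          ring
        rw [hexponent, exp_log (by positivity)]

lemma measure_exists_sum_range_gt_le (hY : ∀ i, Measurable (Y i)) (hindep : iIndepFun Y P)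
    (hsubG : ∀ i, HasSubgaussianMGF (Y i) ((‖w‖₊ / 2) ^ 2) P) (hmean : ∀ i, P[Y i] = 0)
    (hδ : 0 < δ) {L : ℕ} (hL : L ≠ 0) (hδL : L * δ ≤ 4) :
    P {ω | ∃ ℓ ∈ Finset.Icc 1 L,
      ℓ * √(2 * w ^ 2 * log (8 / (δ * ℓ)) / ℓ) < ∑ i ∈ Finset.range ℓ, Y i ω} ≤
      ENNReal.ofReal (L * δ / 2) := by
  set block : ℕ → Set Ω := fun k ↦ {ω | ∃ n ∈ Finset.Icc 1 (2 ^ (k + 1)),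
    √(2 * w ^ 2 * 2 ^ k * log (4 / (δ * 2 ^ k))) < ∑ i ∈ Finset.range n, Y i ω}
  have hcover : {ω | ∃ ℓ ∈ Finset.Icc 1 L,
      ℓ * √(2 * w ^ 2 * log (8 / (δ * ℓ)) / ℓ) < ∑ i ∈ Finset.range ℓ, Y i ω} ⊆
      ⋃ k ∈ Finset.range (Nat.log 2 L + 1), block k := by
    rintro ω ⟨ℓ, hℓ, hlt⟩
    obtain ⟨hℓ1, hℓL⟩ := Finset.mem_Icc.1 hℓ
    have hℓk := Nat.lt_pow_succ_log_self one_lt_two ℓ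
    refine Set.mem_iUnion₂.2 ⟨Nat.log 2 ℓ,
      Finset.mem_range.2 (Nat.lt_succ_of_le (Nat.log_mono_right hℓL)), ℓ,
      Finset.mem_Icc.2 ⟨hℓ1, hℓk.le⟩, ?_⟩
    exact (sqrt_dyadic_le_mul_sqrt w hδ (Nat.pow_log_le_self 2 (by omega)) hℓk.le).trans_lt hlt
  have hblock : ∀ k ∈ Finset.range (Nat.log 2 L + 1),
      P (block k) ≤ ENNReal.ofReal ((δ * 2 ^ k / 4) ^ 2) := fun k hk ↦ by
    have h2k : (2 : ℝ) ^ k ≤ L := by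
      exact_mod_cast Nat.pow_le_of_le_log hL (Nat.lt_succ_iff.1 (Finset.mem_range.1 hk))
    exact measure_exists_sum_range_gt_dyadic_le hY hindep hsubG hmean hδ
      ((mul_le_mul_of_nonneg_left h2k hδ.le).trans (by linarith))
  calc _ ≤ P (⋃ k ∈ Finset.range (Nat.log 2 L + 1), block k) := measure_mono hcover
    _ ≤ ∑ k ∈ Finset.range (Nat.log 2 L + 1), P (block k) := measure_biUnion_finset_le _ _
    _ ≤ ∑ k ∈ Finset.range (Nat.log 2 L + 1), ENNReal.ofReal ((δ * 2 ^ k / 4) ^ 2) :=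
        Finset.sum_le_sum hblock
    _ = ENNReal.ofReal (∑ k ∈ Finset.range (Nat.log 2 L + 1), (δ * 2 ^ k / 4) ^ 2) :=
        (ENNReal.ofReal_sum_of_nonneg fun k _ ↦ by positivity).symm
    _ ≤ ENNReal.ofReal (L * δ / 2) := ENNReal.ofReal_le_ofReal (sum_range_log_sq_le hδ.le hL hδL)

lemma measure_exists_abs_sum_range_gt_le (hY : ∀ i, Measurable (Y i)) (hindep : iIndepFun Y P)
    (hsubG : ∀ i, HasSubgaussianMGF (Y i) ((‖w‖₊ / 2) ^ 2) P) (hmean : ∀ i, P[Y i] = 0)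
    (hδ : 0 < δ) {L : ℕ} (hL : L ≠ 0) (hδL : L * δ ≤ 4) :
    P {ω | ∃ ℓ ∈ Finset.Icc 1 L,
      ℓ * √(2 * w ^ 2 * log (8 / (δ * ℓ)) / ℓ) < |∑ i ∈ Finset.range ℓ, Y i ω|} ≤
      ENNReal.ofReal (L * δ) := by
  have hupper := measure_exists_sum_range_gt_le hY hindep hsubG hmean hδ hL hδL
  have hlower := measure_exists_sum_range_gt_le (fun i ↦ (hY i).neg)
    (hindep.comp (fun _ x ↦ -x) fun _ ↦ measurable_neg) (fun i ↦ (hsubG i).neg)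
    (fun i ↦ by simp [integral_neg, hmean i]) hδ hL hδL
  calc _ ≤ P ({ω | ∃ ℓ ∈ Finset.Icc 1 L,
        ℓ * √(2 * w ^ 2 * log (8 / (δ * ℓ)) / ℓ) < ∑ i ∈ Finset.range ℓ, Y i ω} ∪
      {ω | ∃ ℓ ∈ Finset.Icc 1 L,
        ℓ * √(2 * w ^ 2 * log (8 / (δ * ℓ)) / ℓ) < ∑ i ∈ Finset.range ℓ, (-Y i) ω}) :=
        measure_mono <| by
          rintro ω ⟨ℓ, hℓ, hlt⟩
          exact (lt_abs.1 hlt).imp (fun h ↦ ⟨ℓ, hℓ, h⟩)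
            fun h ↦ ⟨ℓ, hℓ, by simpa [Finset.sum_neg_distrib] using h⟩
    _ ≤ ENNReal.ofReal (L * δ / 2) + ENNReal.ofReal (L * δ / 2) :=
        (measure_union_le _ _).trans (add_le_add hupper hlower)
    _ = ENNReal.ofReal (L * δ) := by
        rw [← ENNReal.ofReal_add (by positivity) (by positivity)]
        ring_nf

end

theorem stmt8_general {Ω : Type*} [MeasurableSpace Ω] (P : Measure Ω) [IsProbabilityMeasure P]
    (L : ℕ) (hL : 1 ≤ L) (X : ℕ → Ω → ℝ) (hmeas : ∀ i, Measurable (X i))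
    (hindep : iIndepFun X P)
    (μ a b : ℝ)
    (hmean : ∀ i, ∫ ω, X i ω ∂P = μ)
    (hbound : ∀ i, ∀ᵐ ω ∂P, X i ω ∈ Set.Icc a b)
    (δ : ℝ) (hδ : 0 < δ) :
    ENNReal.ofReal (1 - L * δ) ≤
      P {ω | ∀ ℓ ∈ Finset.Icc 1 L,
        |(∑ i ∈ Finset.range ℓ, X i ω) / ℓ - μ| ≤
          Real.sqrt (2 * (b - a) ^ 2 * Real.log (8 / (δ * ℓ)) / ℓ)} := by
  rcases le_or_gt 1 (L * δ) with hLδ | hLδ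
  · rw [ENNReal.ofReal_eq_zero.2 (by linarith)]
    exact zero_le
  set Y : ℕ → Ω → ℝ := fun i ω ↦ X i ω - μ
  have hYsubG : ∀ i, HasSubgaussianMGF (Y i) ((‖b - a‖₊ / 2) ^ 2) P := fun i ↦ by
    simpa [Y, hmean i] using hasSubgaussianMGF_of_mem_Icc (hmeas i).aemeasurable (hbound i)
  have hYmean : ∀ i, P[Y i] = 0 := fun i ↦ by
    simp [Y, integral_sub (Integrable.of_mem_Icc a b (hmeas i).aemeasurable (hbound i))
      (integrable_const μ), hmean i]
  have hYindep : iIndepFun Y P := hindep.comp (fun _ x ↦ x - μ) fun _ ↦ measurable_sub_const μ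
  refine ofReal_one_sub_le_measure_of_measure_compl_le (by positivity)
    ((measure_mono fun ω hω ↦ ?_).trans (measure_exists_abs_sum_range_gt_le
      (fun i ↦ (hmeas i).sub_const μ) hYindep hYsubG hYmean hδ (L := L) (by omega) (by linarith)))
  simp only [Set.mem_compl_iff, Set.mem_ofPred_eq, not_forall, not_le] at hω
  obtain ⟨ℓ, hℓ, hlt⟩ := hω
  exact ⟨ℓ, hℓ, mul_lt_abs_sum_sub_of_lt_abs_div_sub
    (Nat.one_le_iff_ne_zero.1 (Finset.mem_Icc.1 hℓ).1) hlt⟩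

/-- uniform concentration with adaptively shrinking confidence levels. -/
theorem stmt8 {Ω : Type*} [MeasurableSpace Ω] (P : Measure Ω) [IsProbabilityMeasure P]
    (L : ℕ) (hL : 1 ≤ L) (X : ℕ → Ω → ℝ) (hmeas : ∀ i, Measurable (X i))
    (hindep : iIndepFun X P)
    (hident : ∀ i, IdentDistrib (X i) (X 0) P P)
    (μ a b : ℝ) (hab : a ≤ b)
    (hmean : ∀ i, ∫ ω, X i ω ∂P = μ)
    (hbound : ∀ i, ∀ᵐ ω ∂P, X i ω ∈ Set.Icc a b)
    (δ : ℝ) (hδ : 0 < δ) (hδ1 : δ ≤ 1) :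
    ENNReal.ofReal (1 - L * δ) ≤
      P {ω | ∀ ℓ ∈ Finset.Icc 1 L,
        |(∑ i ∈ Finset.range ℓ, X i ω) / ℓ - μ| ≤
          Real.sqrt (2 * (b - a) ^ 2 * Real.log (8 / (δ * ℓ)) / ℓ)} :=
  stmt8_general P L hL X hmeas hindep μ a b hmean hbound δ hδ
end

section
/- Hoeffding's maximal inequality: let X_1, …, X_n be i.i.d. random variables with mean μ and a ≤ X_i ≤ b almost surely. Then for any t > 0, the probability that there exists i ∈ {1,…,n} with X_1 + ⋯ + X_i ≥ iμ + t is at most exp(−2t²/(n(b−a)²)). -/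
/-! For `l ≥ 0` the process `k ↦ exp (l * S_k)` built from the centred partial sums is a
nonnegative submartingale for the natural filtration: the next increment is independent of the
past and `E[exp (l Y)] ≥ 1 + l E[Y] = 1`. Doob's maximal inequality bounds the probability that
the process ever reaches `exp (l t)` by `exp (-l t) E[exp (l S_n)]`, Hoeffding's lemma bounds this
moment generating function by `exp (n l² (b - a)² / 8)`, and `l = 4 t / (n (b - a)²)`
optimizes. -/

open MeasureTheory ProbabilityTheory Real

namespace ProbabilityTheory

variable {Ω : Type*} {Y : ℕ → Ω → ℝ}

lemma exp_mul_sum_range_succ (l : ℝ) (k : ℕ) :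
    (fun ω => exp (l * ∑ j ∈ Finset.range (k + 1 + 1), Y j ω)) =
      (fun ω => exp (l * ∑ j ∈ Finset.range (k + 1), Y j ω)) *
        fun ω => exp (l * Y (k + 1) ω) := by
  ext ω
  simp only [Finset.sum_range_succ _ (k + 1), mul_add, exp_add, Pi.mul_apply]

variable [MeasurableSpace Ω] {P : Measure Ω}

lemma one_le_integral_exp_mul [IsProbabilityMeasure P] {Z : Ω → ℝ} (hZ : Integrable Z P)
    (hZ0 : ∫ ω, Z ω ∂P = 0) (l : ℝ) (hexp : Integrable (fun ω => exp (l * Z ω)) P) :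
    1 ≤ ∫ ω, exp (l * Z ω) ∂P :=
  calc (1 : ℝ) = ∫ ω, (l * Z ω + 1) ∂P := by
        rw [integral_add (hZ.const_mul l) (integrable_const 1), integral_const_mul, hZ0]; simp
    _ ≤ ∫ ω, exp (l * Z ω) ∂P :=
        integral_mono ((hZ.const_mul l).add (integrable_const 1)) hexp
          fun ω => add_one_le_exp _

lemma iIndepFun.indep_natural_comap_succ (hY : ∀ i, Measurable (Y i)) (hindep : iIndepFun Y P)
    (k : ℕ) :
    Indep (Filtration.natural Y (fun i => (hY i).stronglyMeasurable) k)
      (MeasurableSpace.comap (Y (k + 1)) inferInstance) P := by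
  have := indep_iSup_of_disjoint (fun i => (hY i).comap_le)
    ((iIndepFun_iff_iIndep _ Y P).1 hindep)
    (Set.disjoint_singleton_right.2 (Set.notMem_Iic.2 k.lt_succ_self) :
      Disjoint (Set.Iic k) {k + 1})
  rwa [iSup_singleton] at this

lemma measurable_exp_mul_sum_range_natural (hY : ∀ i, Measurable (Y i)) (l : ℝ) (k : ℕ) :
    Measurable[Filtration.natural Y (fun i => (hY i).stronglyMeasurable) k]
      (fun ω => exp (l * ∑ j ∈ Finset.range (k + 1), Y j ω)) := by
  refine (Measurable.const_mul (Finset.measurable_sum _ fun j hj => ?_) l).exp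
  exact ((Filtration.stronglyAdapted_natural (fun i => (hY i).stronglyMeasurable) j).mono
    (Filtration.mono _ (Nat.lt_succ_iff.1 (Finset.mem_range.1 hj)))).measurable

lemma indepFun_exp_mul_sum_range_exp_mul (hY : ∀ i, Measurable (Y i)) (hindep : iIndepFun Y P)
    (l : ℝ) (k : ℕ) :
    IndepFun (fun ω => exp (l * ∑ j ∈ Finset.range (k + 1), Y j ω))
      (fun ω => exp (l * Y (k + 1) ω)) P := by
  rw [IndepFun_iff_Indep]
  exact indep_of_indep_of_le_right
    (indep_of_indep_of_le_left (hindep.indep_natural_comap_succ hY k)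
      (measurable_exp_mul_sum_range_natural hY l k).comap_le)
    ((comap_measurable (Y (k + 1))).const_mul l).exp.comap_le

/-- The process is indexed so that at time `k` it involves `Y 0, …, Y k`, which is what the
natural filtration of `Y` sees at time `k`. -/
lemma iIndepFun.submartingale_exp_mul_sum_range [IsProbabilityMeasure P]
    (hY : ∀ i, Measurable (Y i)) (hindep : iIndepFun Y P) (hint : ∀ i, Integrable (Y i) P)
    (hmean : ∀ i, ∫ ω, Y i ω ∂P = 0) (l : ℝ)
    (hexp : ∀ i, Integrable (fun ω => exp (l * Y i ω)) P) :
    Submartingale (fun k ω => exp (l * ∑ j ∈ Finset.range (k + 1), Y j ω))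
      (Filtration.natural Y (fun i => (hY i).stronglyMeasurable)) P := by
  have hintegrable :
      ∀ k, Integrable (fun ω => exp (l * ∑ j ∈ Finset.range (k + 1), Y j ω)) P := by
    intro k
    induction k with
    | zero => simpa using hexp 0
    | succ k ih =>
      rw [exp_mul_sum_range_succ]
      exact (indepFun_exp_mul_sum_range_exp_mul hY hindep l k).integrable_mul ih (hexp (k + 1))
  refine submartingale_nat
    (fun k => (measurable_exp_mul_sum_range_natural hY l k).stronglyMeasurable) hintegrable
    fun k => ?_
  have hcond := condExp_mul_of_stronglyMeasurable_left
    (measurable_exp_mul_sum_range_natural hY l k).stronglyMeasurable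
    (exp_mul_sum_range_succ (Y := Y) l k ▸ hintegrable (k + 1)) (hexp (k + 1))
  have hcondIndep := condExp_indep_eq (hY (k + 1)).comap_le (Filtration.le _ k)
    ((comap_measurable (Y (k + 1))).const_mul l).exp.stronglyMeasurable
    (hindep.indep_natural_comap_succ hY k).symm
  rw [exp_mul_sum_range_succ]
  filter_upwards [hcond, hcondIndep] with ω h1 h2
  rw [h1, Pi.mul_apply, h2]
  exact le_mul_of_one_le_right (exp_pos _).le
    (one_le_integral_exp_mul (hint _) (hmean _) l (hexp _))

lemma iIndepFun.measure_exists_sum_range_ge_le_exp_mul_mgf [IsProbabilityMeasure P]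
    (hY : ∀ i, Measurable (Y i)) (hindep : iIndepFun Y P) (hint : ∀ i, Integrable (Y i) P)
    (hmean : ∀ i, ∫ ω, Y i ω ∂P = 0) {l : ℝ} (hl : 0 ≤ l)
    (hexp : ∀ i, Integrable (fun ω => exp (l * Y i ω)) P) (ε : ℝ) (n : ℕ) :
    P {ω | ∃ k ∈ Finset.Icc 1 n, ε ≤ ∑ j ∈ Finset.range k, Y j ω} ≤
      ENNReal.ofReal (exp (-(l * ε)) * mgf (fun ω => ∑ j ∈ Finset.range n, Y j ω) P l) := by
  obtain _ | m := n
  · simp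
  have hsub := hindep.submartingale_exp_mul_sum_range hY hint hmean l hexp
  set E := {ω | ((exp (l * ε)).toNNReal : ℝ) ≤ (Finset.range (m + 1)).sup'
    Finset.nonempty_range_add_one fun k => exp (l * ∑ j ∈ Finset.range (k + 1), Y j ω)}
  have hcover :
      {ω | ∃ k ∈ Finset.Icc 1 (m + 1), ε ≤ ∑ j ∈ Finset.range k, Y j ω} ⊆ E := by
    rintro ω ⟨k, hk, hεk⟩
    obtain ⟨j, rfl⟩ : ∃ j, k = j + 1 := Nat.exists_eq_add_of_le' (Finset.mem_Icc.1 hk).1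
    have hj : j ∈ Finset.range (m + 1) := by
      simp only [Finset.mem_Icc, Finset.mem_range] at hk ⊢; omega
    simp only [E, Set.mem_ofPred_eq]
    refine Finset.le_sup'_of_le _ hj ?_
    rw [Real.coe_toNNReal _ (exp_pos _).le]
    exact exp_le_exp.2 (mul_le_mul_of_nonneg_left hεk hl)
  have hdoob := maximal_ineq hsub (fun k ω => (exp_pos _).le) (ε := (exp (l * ε)).toNNReal) m
  have htail : ∫ ω in E, exp (l * ∑ j ∈ Finset.range (m + 1), Y j ω) ∂P ≤
      mgf (fun ω => ∑ j ∈ Finset.range (m + 1), Y j ω) P l :=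
    setIntegral_le_integral (hsub.integrable m) (ae_of_all _ fun ω => (exp_pos _).le)
  calc P _ ≤ P E := measure_mono hcover
    _ = ENNReal.ofReal (exp (-(l * ε))) * ((exp (l * ε)).toNNReal * P E) := by
        change _ = ENNReal.ofReal _ * (ENNReal.ofReal _ * P E)
        rw [← mul_assoc, ← ENNReal.ofReal_mul (exp_pos _).le,
          ← exp_add, neg_add_cancel, exp_zero, ENNReal.ofReal_one, one_mul]
    _ ≤ ENNReal.ofReal (exp (-(l * ε))) *
          ENNReal.ofReal (mgf (fun ω => ∑ j ∈ Finset.range (m + 1), Y j ω) P l) := by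
        gcongr
        exact hdoob.trans (ENNReal.ofReal_le_ofReal htail)
    _ = _ := (ENNReal.ofReal_mul (exp_pos _).le).symm

lemma iIndepFun.measure_exists_sum_range_ge_le_of_hasSubgaussianMGF [IsProbabilityMeasure P]
    (hY : ∀ i, Measurable (Y i)) (hindep : iIndepFun Y P) (hmean : ∀ i, ∫ ω, Y i ω ∂P = 0)
    {c : NNReal} (hsubG : ∀ i, HasSubgaussianMGF (Y i) c P) {ε : ℝ} (hε : 0 ≤ ε)
    (n : ℕ) :
    P {ω | ∃ k ∈ Finset.Icc 1 n, ε ≤ ∑ j ∈ Finset.range k, Y j ω} ≤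
      ENNReal.ofReal (exp (-ε ^ 2 / (2 * n * c))) := by
  rcases (mul_nonneg n.cast_nonneg c.coe_nonneg : (0 : ℝ) ≤ n * c).eq_or_lt with hnc | hnc
  · rw [mul_assoc, ← hnc, mul_zero, div_zero, exp_zero, ENNReal.ofReal_one]
    exact prob_le_one
  have hsum := (HasSubgaussianMGF.sum_of_iIndepFun hindep (s := Finset.range n)
    fun i _ => hsubG i).mgf_le (ε / (n * c))
  simp only [Finset.sum_const, Finset.card_range, nsmul_eq_mul, NNReal.coe_mul,
    NNReal.coe_natCast] at hsum
  refine (hindep.measure_exists_sum_range_ge_le_exp_mul_mgf hY (fun i => (hsubG i).integrable)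
    hmean (l := ε / (n * c)) (by positivity) (fun i => (hsubG i).integrable_exp_mul _) ε n).trans
    (ENNReal.ofReal_le_ofReal ?_)
  calc exp (-(ε / (n * c) * ε)) *
        mgf (fun ω => ∑ j ∈ Finset.range n, Y j ω) P (ε / (n * c))
      ≤ exp (-(ε / (n * c) * ε)) * exp (n * c * (ε / (n * c)) ^ 2 / 2) := by gcongr
    _ = exp (-ε ^ 2 / (2 * n * c)) := by
        rw [← exp_add]; congr 1; field_simp; ring

end ProbabilityTheory

theorem stmt9_general {Ω : Type*} [MeasurableSpace Ω] (P : Measure Ω) [IsProbabilityMeasure P]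
    (n : ℕ) (X : ℕ → Ω → ℝ) (hmeas : ∀ i, Measurable (X i))
    (hindep : iIndepFun X P)
    (μ a b : ℝ)
    (hmean : ∀ i, ∫ ω, X i ω ∂P = μ)
    (hbound : ∀ i, ∀ᵐ ω ∂P, X i ω ∈ Set.Icc a b)
    (t : ℝ) (ht : 0 < t) :
    P {ω | ∃ i ∈ Finset.Icc 1 n, (i : ℝ) * μ + t ≤ ∑ j ∈ Finset.range i, X j ω}
      ≤ ENNReal.ofReal (Real.exp (-(2 * t ^ 2) / (n * (b - a) ^ 2))) := by
  set Y : ℕ → Ω → ℝ := fun i ω => X i ω - μ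
  have hsubG : ∀ i, HasSubgaussianMGF (Y i) ((‖b - a‖₊ / 2) ^ 2) P := fun i => by
    have h := hasSubgaussianMGF_of_mem_Icc (hmeas i).aemeasurable (hbound i)
    rwa [hmean i] at h
  have hYmean : ∀ i, ∫ ω, Y i ω ∂P = 0 := fun i => by
    simp [Y, integral_sub (Integrable.of_mem_Icc a b (hmeas i).aemeasurable (hbound i))
      (integrable_const μ), hmean i]
  have hevent :
      {ω | ∃ i ∈ Finset.Icc 1 n, (i : ℝ) * μ + t ≤ ∑ j ∈ Finset.range i, X j ω} =
        {ω | ∃ k ∈ Finset.Icc 1 n, t ≤ ∑ j ∈ Finset.range k, Y j ω} := by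
    ext ω
    simp only [Y, Finset.sum_sub_distrib, Finset.sum_const, Finset.card_range, nsmul_eq_mul,
      le_sub_iff_add_le', Set.mem_ofPred_eq]
  have hexponent : -t ^ 2 / (2 * n * ((‖b - a‖₊ / 2) ^ 2 : NNReal)) =
      -(2 * t ^ 2) / (n * (b - a) ^ 2) := by
    simp only [NNReal.coe_pow, NNReal.coe_div, coe_nnnorm, norm_eq_abs, div_pow, sq_abs,
      NNReal.coe_ofNat]
    rw [show (2 : ℝ) * n * ((b - a) ^ 2 / 2 ^ 2) = n * (b - a) ^ 2 / 2 by ring,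
      div_div_eq_mul_div]
    ring
  rw [hevent, ← hexponent]
  exact (hindep.comp _ fun _ => measurable_id.sub_const μ)
    |>.measure_exists_sum_range_ge_le_of_hasSubgaussianMGF (fun i => (hmeas i).sub_const μ)
      hYmean hsubG ht.le n

/-- Hoeffding's maximal inequality. -/
theorem stmt9 {Ω : Type*} [MeasurableSpace Ω] (P : Measure Ω) [IsProbabilityMeasure P]
    (n : ℕ) (hn : 1 ≤ n) (X : ℕ → Ω → ℝ) (hmeas : ∀ i, Measurable (X i))
    (hindep : iIndepFun X P)
    (hident : ∀ i, IdentDistrib (X i) (X 0) P P)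
    (μ a b : ℝ) (hab : a ≤ b)
    (hmean : ∀ i, ∫ ω, X i ω ∂P = μ)
    (hbound : ∀ i, ∀ᵐ ω ∂P, X i ω ∈ Set.Icc a b)
    (t : ℝ) (ht : 0 < t) :
    P {ω | ∃ i ∈ Finset.Icc 1 n, (i : ℝ) * μ + t ≤ ∑ j ∈ Finset.range i, X j ω}
      ≤ ENNReal.ofReal (Real.exp (-(2 * t ^ 2) / (n * (b - a) ^ 2))) :=
  stmt9_general P n X hmeas hindep μ a b hmean hbound t ht
end

section
/- Fix T ≥ 1 and consider two MNL instances on items {1,2} with v_2 = 1, revenues r_1 = 1, r_2 = 1/2, and v_1 = 1 − 1/(4√T) under P_0 versus v_1 = 1 + 1/(4√T) under P_1. For any assortment S ⊆ {1,2}, the KL divergence between the purchase-outcome distributions P_0(S) and P_1(S) (categorical distributions on S ∪ {0} with probabilities v_j/(1+∑_{i∈S}v_i) for j ∈ S and 1/(1+∑_{i∈S}v_i) for j=0) satisfies KL(P_0(S)‖P_1(S)) ≤ 1/(18T). -/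
/-!
Only item 0's utility differs between the two instances, so every other outcome has the same
likelihood ratio `D₁/D₀` of the normalizers and
`KL = log (D₁/D₀) + p₀ log (v₀/w₀)`. This vanishes when item 0 is not offered; otherwise, with
`a = 1 + |S|`, it equals `log ((a+ε)/(a-ε)) - (1-ε)/(a-ε) · log ((1+ε)/(1-ε))`. The series
`log ((1+x)/(1-x)) = ∑ 2x^(2k+1)/(2k+1)` gives `2x ≤ log ((1+x)/(1-x)) ≤ 2x/(1-x²)`, which bounds
this by `2ε²(a-1+ε)/(a²-ε²) ≤ 8ε²/9 = 1/(18T)` for `ε = 1/(4√T) ≤ 1/4`.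
-/

/-- Utility parameters of the two items: item 0 has utility 1 + ε, item 1 has utility 1.
(Revenues are r_0 = 1 and r_1 = 1/2; they do not enter the choice probabilities.) -/
noncomputable def lbV (ε : ℝ) : Fin 2 → ℝ := ![1 + ε, 1]

/-- Normalizing denominator 1 + ∑_{i∈S} v_i. -/
noncomputable def lbD (ε : ℝ) (S : Finset (Fin 2)) : ℝ := 1 + ∑ i ∈ S, lbV ε i

/-- KL divergence between the purchase-outcome distributions (on S ∪ {no-purchase})
of the MNL instances with perturbations ε₀ and ε₁ of item 0's utility. -/
noncomputable def lbKL (ε₀ ε₁ : ℝ) (S : Finset (Fin 2)) : ℝ :=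
  (1 / lbD ε₀ S) * Real.log ((1 / lbD ε₀ S) / (1 / lbD ε₁ S)) +
    ∑ j ∈ S, (lbV ε₀ j / lbD ε₀ S) *
      Real.log ((lbV ε₀ j / lbD ε₀ S) / (lbV ε₁ j / lbD ε₁ S))

open Real Finset

section Artanh

variable {x : ℝ}

theorem two_mul_le_log_one_add_div_one_sub (hx₀ : 0 ≤ x) (hx₁ : x < 1) :
    2 * x ≤ log ((1 + x) / (1 - x)) := by
  have hs := hasSum_log_sub_log_of_abs_lt_one (abs_lt.2 ⟨by linarith, hx₁⟩)
  rw [← log_div (by linarith) (by linarith)] at hs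
  simpa using le_hasSum hs 0 fun k _ ↦ by positivity

theorem log_one_add_div_one_sub_le (hx₀ : 0 ≤ x) (hx₁ : x < 1) :
    log ((1 + x) / (1 - x)) ≤ 2 * x / (1 - x ^ 2) := by
  have hs := hasSum_log_sub_log_of_abs_lt_one (abs_lt.2 ⟨by linarith, hx₁⟩)
  rw [← log_div (by linarith) (by linarith)] at hs
  have hx2 : x ^ 2 < 1 := by nlinarith
  have hg := (hasSum_geometric_of_lt_one (sq_nonneg x) hx2).mul_left (2 * x)
  rw [← div_eq_mul_inv] at hg
  refine hasSum_le (fun k ↦ ?_) hs hg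
  have hk : 1 / (2 * (k : ℝ) + 1) ≤ 1 := by
    rw [div_le_one (by positivity)]; linarith [k.cast_nonneg (α := ℝ)]
  rw [pow_succ, pow_mul]
  have : 0 ≤ (x ^ 2) ^ k * x := by positivity
  nlinarith

end Artanh

theorem log_div_sub_mul_log_div_le {a ε : ℝ} (ha : 1 ≤ a) (hε₀ : 0 ≤ ε) (hε : ε ≤ 1 / 4) :
    log ((a + ε) / (a - ε)) - (1 - ε) / (a - ε) * log ((1 + ε) / (1 - ε)) ≤ 8 / 9 * ε ^ 2 := by
  have hεa : ε / a < 1 := by rw [div_lt_one (by linarith)]; linarith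
  have hupper : log ((a + ε) / (a - ε)) ≤ 2 * a * ε / (a ^ 2 - ε ^ 2) := by
    have h := log_one_add_div_one_sub_le (div_nonneg hε₀ (by linarith)) hεa
    have ha0 : a ≠ 0 := by positivity
    rwa [show (1 + ε / a) / (1 - ε / a) = (a + ε) / (a - ε) by field_simp,
      show 2 * (ε / a) / (1 - (ε / a) ^ 2) = 2 * a * ε / (a ^ 2 - ε ^ 2) by field_simp] at h
  have hlower : (1 - ε) / (a - ε) * (2 * ε) ≤ (1 - ε) / (a - ε) * log ((1 + ε) / (1 - ε)) :=
    mul_le_mul_of_nonneg_left (two_mul_le_log_one_add_div_one_sub hε₀ (by linarith))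
      (div_nonneg (by linarith) (by linarith))
  have hsharp : 2 * a * ε / (a ^ 2 - ε ^ 2) - (1 - ε) / (a - ε) * (2 * ε)
      = 2 * ε ^ 2 * (a - 1 + ε) / (a ^ 2 - ε ^ 2) := by
    have : a - ε ≠ 0 := by linarith
    rw [show a ^ 2 - ε ^ 2 = (a - ε) * (a + ε) by ring]
    field_simp
    ring
  have hfinal : 2 * ε ^ 2 * (a - 1 + ε) / (a ^ 2 - ε ^ 2) ≤ 8 / 9 * ε ^ 2 := by
    have hcoef : 2 * (a - 1 + ε) ≤ 8 / 9 * (a ^ 2 - ε ^ 2) := by nlinarith [sq_nonneg (a - 9 / 8)]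
    rw [div_le_iff₀ (by nlinarith)]
    nlinarith [mul_le_mul_of_nonneg_left hcoef (sq_nonneg ε)]
  linarith

section MNL

variable {ε ε₀ ε₁ : ℝ} {S : Finset (Fin 2)}

theorem lbV_pos (hε : -1 < ε) (i : Fin 2) : 0 < lbV ε i := by
  fin_cases i <;> simp [lbV]; linarith

theorem lbV_of_ne_zero (ε : ℝ) {i : Fin 2} (hi : i ≠ 0) : lbV ε i = 1 := by
  fin_cases i
  · exact absurd rfl hi
  · simp [lbV]

theorem lbD_pos (hε : -1 < ε) (S : Finset (Fin 2)) : 0 < lbD ε S :=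
  add_pos_of_pos_of_nonneg one_pos (sum_nonneg fun i _ ↦ (lbV_pos hε i).le)

theorem lbD_eq (ε : ℝ) (S : Finset (Fin 2)) : lbD ε S = 1 + #S + if 0 ∈ S then ε else 0 := by
  have hV : ∀ i, lbV ε i = 1 + if i = 0 then ε else 0 := by
    intro i; fin_cases i <;> simp [lbV]
  simp only [lbD, hV, sum_add_distrib, sum_ite_eq', sum_const, nsmul_eq_mul, mul_one]
  ring

theorem lbKL_eq_log_add_sum (h₀ : -1 < ε₀) (h₁ : -1 < ε₁) (S : Finset (Fin 2)) :
    lbKL ε₀ ε₁ S = log (lbD ε₁ S / lbD ε₀ S) +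
      ∑ j ∈ S, lbV ε₀ j / lbD ε₀ S * log (lbV ε₀ j / lbV ε₁ j) := by
  have hD₀ := lbD_pos h₀ S
  have hD₁ := lbD_pos h₁ S
  have hsplit : ∀ v w : ℝ, 0 < v → 0 < w →
      log (v / lbD ε₀ S / (w / lbD ε₁ S)) = log (lbD ε₁ S / lbD ε₀ S) + log (v / w) := by
    intro v w hv hw
    rw [← log_mul (by positivity) (by positivity)]
    congr 1
    field_simp
  have htotal : 1 / lbD ε₀ S + ∑ j ∈ S, lbV ε₀ j / lbD ε₀ S = 1 := by
    rw [← sum_div, ← add_div, ← lbD, div_self hD₀.ne']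
  unfold lbKL
  rw [hsplit 1 1 one_pos one_pos,
    sum_congr rfl fun j _ ↦ by rw [hsplit _ _ (lbV_pos h₀ j) (lbV_pos h₁ j)]]
  simp only [div_one, log_one, add_zero, mul_add, sum_add_distrib, ← sum_mul]
  linear_combination log (lbD ε₁ S / lbD ε₀ S) * htotal

theorem lbKL_eq_zero_of_notMem (h₀ : -1 < ε₀) (h₁ : -1 < ε₁) (hS : 0 ∉ S) :
    lbKL ε₀ ε₁ S = 0 := by
  have hD : lbD ε₁ S = lbD ε₀ S := by simp only [lbD_eq, hS, if_false]
  rw [lbKL_eq_log_add_sum h₀ h₁, hD, div_self (lbD_pos h₀ S).ne', log_one, zero_add]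
  refine sum_eq_zero fun j hj ↦ ?_
  have hj0 : j ≠ 0 := ne_of_mem_of_not_mem hj hS
  simp [lbV_of_ne_zero _ hj0]

theorem lbKL_neg_eq_of_mem (hε : |ε| < 1) (hS : 0 ∈ S) :
    lbKL (-ε) ε S = log ((1 + #S + ε) / (1 + #S - ε)) -
      (1 - ε) / (1 + #S - ε) * log ((1 + ε) / (1 - ε)) := by
  obtain ⟨hε₀, hε₁⟩ := abs_lt.1 hε
  rw [lbKL_eq_log_add_sum (by linarith) hε₀, lbD_eq, lbD_eq, if_pos hS, if_pos hS,
    sum_eq_single_of_mem 0 hS fun j _ hj ↦ by simp [lbV_of_ne_zero _ hj]]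
  have : log ((1 - ε) / (1 + ε)) = - log ((1 + ε) / (1 - ε)) := by
    rw [← log_inv, inv_div]
  simp only [lbV, Matrix.cons_val_zero, ← sub_eq_add_neg, this]
  ring

end MNL

/-- KL(P₀(S) ‖ P₁(S)) ≤ 1/(18T) for every assortment S ⊆ {1,2}. -/
theorem stmt11 (T : ℕ) (hT : 1 ≤ T) (S : Finset (Fin 2)) :
    lbKL (-(1 / (4 * Real.sqrt T))) (1 / (4 * Real.sqrt T)) S ≤ 1 / (18 * T) := by
  set ε := 1 / (4 * √T) with hε
  have hT₁ : (1 : ℝ) ≤ T := by exact_mod_cast hT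
  have hsqrt : 1 ≤ √(T : ℝ) := one_le_sqrt.2 hT₁
  have hε₀ : 0 < ε := by positivity
  have hε₁ : ε ≤ 1 / 4 := by
    rw [hε, div_le_div_iff₀ (by positivity) (by norm_num)]; linarith
  have hrhs : 1 / (18 * (T : ℝ)) = 8 / 9 * ε ^ 2 := by
    rw [hε, div_pow, mul_pow, sq_sqrt (by positivity)]
    field_simp
    norm_num
  rw [hrhs]
  by_cases hS : 0 ∈ S
  · rw [lbKL_neg_eq_of_mem (abs_lt.2 ⟨by linarith, by linarith⟩) hS]
    exact log_div_sub_mul_log_div_le (by simp) hε₀.le hε₁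
  · rw [lbKL_eq_zero_of_notMem (by linarith) (by linarith) hS]
    positivity
end
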